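/- Let θ > 1 be real, let d ∈ ℕ, let c_1,…,c_d > 0 be reals, let M ≥ 1 be real, and let κ > 1/θ. Then the set {l = (l_1,…,l_d) ∈ ℤ^d : ∏_{j=1}^d (r_{θ,c_j}(l_j))^{-1} ≤ M} is finite and its cardinality is at most M^κ · ∏_{j=1}^d (1 + 2ζ(θκ) c_j^κ), where ζ is the Riemann zeta function. -/

import Mathlib

/-! Rankin's trick: every `l` in the set satisfies `1 ≤ M ^ κ * ∏ j, r_{θ,c_j}(l_j) ^ κ`, so its
cardinality is at most the sum of the right-hand side over `ℤ^d`. That sum factors as `M ^ κ` times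
the one-dimensional sums `∑_{l ∈ ℤ} r_{θ,c}(l) ^ κ = 1 + 2 ζ(θκ) c ^ κ`, which converge since `θκ > 1`. -/

open scoped BigOperators

/-- The Korobov-space decay function r_{θ,c} : ℤ → ℝ,
    r_{θ,c}(0) = 1 and r_{θ,c}(l) = c·|l|^{-θ} for l ≠ 0. -/
noncomputable def rK (θ c : ℝ) (l : ℤ) : ℝ :=
  if l = 0 then 1 else c * |(l : ℝ)| ^ (-θ)

/-- The Riemann zeta function, viewed as a real-valued function of a real argument. -/
noncomputable def zetaR (x : ℝ) : ℝ := (riemannZeta (x : ℂ)).re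

theorem Set.finite_and_ncard_le_of_forall_finset_card_le {α : Type*} {S : Set α} {B : ℝ}
    (h : ∀ T : Finset α, ↑T ⊆ S → (T.card : ℝ) ≤ B) : S.Finite ∧ (S.ncard : ℝ) ≤ B := by
  have hfin : S.Finite := by
    by_contra hinf
    obtain ⟨T, hTS, hTcard⟩ := Set.Infinite.exists_subset_card_eq hinf (⌈B⌉₊ + 1)
    have hT := h T hTS
    rw [hTcard, Nat.cast_add_one] at hT
    linarith [Nat.le_ceil B]
  refine ⟨hfin, ?_⟩
  simpa [Set.ncard_eq_toFinset_card S hfin] using h hfin.toFinset (by simp)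

theorem Finset.sum_prod_le_prod_tsum {ι : Type*} [Fintype ι] {α : ι → Type*}
    {f : ∀ i, α i → ℝ} (hf : ∀ i, Summable (f i)) (hf₀ : ∀ i a, 0 ≤ f i a)
    (T : Finset (∀ i, α i)) : ∑ x ∈ T, ∏ i, f i (x i) ≤ ∏ i, ∑' a, f i a := by
  classical
  let t : ∀ i, Finset (α i) := fun i => T.image (· i)
  have hT : T ⊆ Fintype.piFinset t := fun x hx =>
    Fintype.mem_piFinset.mpr fun i => Finset.mem_image_of_mem _ hx
  calc ∑ x ∈ T, ∏ i, f i (x i)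
      ≤ ∑ x ∈ Fintype.piFinset t, ∏ i, f i (x i) :=
        Finset.sum_le_sum_of_subset_of_nonneg hT fun x _ _ =>
          Finset.prod_nonneg fun i _ => hf₀ i (x i)
    _ = ∏ i, ∑ a ∈ t i, f i a := (Finset.prod_univ_sum t f).symm
    _ ≤ ∏ i, ∑' a, f i a :=
        Finset.prod_le_prod (fun i _ => Finset.sum_nonneg fun a _ => hf₀ i a)
          fun i _ => (hf i).sum_le_tsum (t i) fun a _ => hf₀ i a

theorem hasSum_zetaR {s : ℝ} (hs : 1 < s) :
    HasSum (fun n : ℕ => ((n : ℝ) + 1) ^ (-s)) (zetaR s) := by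
  have hsum : Summable (fun n : ℕ => ((n : ℝ) + 1) ^ (-s)) :=
    ((Real.summable_one_div_nat_add_rpow 1 s).mpr hs).congr fun n => by
      rw [Real.rpow_neg (by positivity), one_div, abs_of_nonneg (by positivity)]
  have hterm : ∀ n : ℕ, ((((n : ℝ) + 1) ^ (-s) : ℝ) : ℂ) = 1 / ((n : ℂ) + 1) ^ (s : ℂ) := by
    intro n
    rw [Real.rpow_neg (by positivity), Complex.ofReal_inv,
      Complex.ofReal_cpow (by positivity), one_div]
    push_cast
    rfl
  have hℂ : HasSum (fun n : ℕ => ((((n : ℝ) + 1) ^ (-s) : ℝ) : ℂ)) (riemannZeta s) := by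
    rw [zeta_eq_tsum_one_div_nat_add_one_cpow (by simpa using hs), ← tsum_congr hterm]
    exact (Complex.summable_ofReal.mpr hsum).hasSum
  simpa [zetaR] using Complex.hasSum_re hℂ

theorem rK_pos {θ c : ℝ} (hc : 0 < c) (l : ℤ) : 0 < rK θ c l := by
  unfold rK
  split_ifs with hl
  · exact one_pos
  · have : 0 < |(l : ℝ)| := abs_pos.mpr (Int.cast_ne_zero.mpr hl)
    positivity

theorem rK_zero (θ c : ℝ) : rK θ c 0 = 1 := if_pos rfl

theorem rK_rpow_of_ne_zero {θ c : ℝ} (hc : 0 ≤ c) (κ : ℝ) {l : ℤ} (hl : l ≠ 0) :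
    rK θ c l ^ κ = c ^ κ * |(l : ℝ)| ^ (-(θ * κ)) := by
  rw [rK, if_neg hl, Real.mul_rpow hc (Real.rpow_nonneg (abs_nonneg _) _),
    ← Real.rpow_mul (abs_nonneg _), neg_mul]

theorem hasSum_rK_rpow {θ c κ : ℝ} (hc : 0 ≤ c) (hθκ : 1 < θ * κ) :
    HasSum (fun l : ℤ => rK θ c l ^ κ) (1 + 2 * zetaR (θ * κ) * c ^ κ) := by
  have hside : HasSum (fun n : ℕ => c ^ κ * ((n : ℝ) + 1) ^ (-(θ * κ)))
      (c ^ κ * zetaR (θ * κ)) := (hasSum_zetaR hθκ).mul_left _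
  have hpos : HasSum (fun n : ℕ => rK θ c ((n : ℤ) + 1) ^ κ) (c ^ κ * zetaR (θ * κ)) :=
    hside.congr_fun fun n => by
      rw [rK_rpow_of_ne_zero hc κ (by positivity)]
      push_cast
      rw [abs_of_nonneg (by positivity)]
  have hneg : HasSum (fun n : ℕ => rK θ c (-((n : ℤ) + 1)) ^ κ) (c ^ κ * zetaR (θ * κ)) :=
    hside.congr_fun fun n => by
      rw [rK_rpow_of_ne_zero hc κ (neg_ne_zero.mpr (by positivity))]
      push_cast
      rw [abs_neg, abs_of_nonneg (by positivity)]
  convert HasSum.of_add_one_of_neg_add_one (f := fun l : ℤ => rK θ c l ^ κ) hpos hneg using 1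
  rw [rK_zero, Real.one_rpow]
  ring

theorem one_le_rpow_mul_rpow_of_inv_le {x M κ : ℝ} (hx : 0 < x) (hxM : x⁻¹ ≤ M) (hκ : 0 ≤ κ) :
    1 ≤ M ^ κ * x ^ κ := by
  have hMx : 1 ≤ M * x := by rwa [inv_le_iff_one_le_mul₀ hx] at hxM
  have hM : 0 ≤ M := (inv_pos.mpr hx).le.trans hxM
  rw [← Real.mul_rpow hM hx.le]
  exact Real.one_le_rpow hMx hκ

theorem stmt_3 (θ : ℝ) (hθ : 1 < θ) (d : ℕ) (c : Fin d → ℝ) (hc : ∀ j, 0 < c j)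
    (M : ℝ) (hM : 1 ≤ M) (κ : ℝ) (hκ : 1 / θ < κ) :
    {l : Fin d → ℤ | (∏ j : Fin d, (rK θ (c j) (l j))⁻¹) ≤ M}.Finite ∧
      (({l : Fin d → ℤ | (∏ j : Fin d, (rK θ (c j) (l j))⁻¹) ≤ M}).ncard : ℝ) ≤
        M ^ κ * ∏ j : Fin d, (1 + 2 * zetaR (θ * κ) * (c j) ^ κ) := by
  have hθκ : 1 < θ * κ := by rwa [div_lt_iff₀' (by linarith)] at hκ
  have hκ₀ : 0 ≤ κ := (one_div_pos.mpr (by linarith)).le.trans hκ.le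
  have hsum j := hasSum_rK_rpow (θ := θ) (hc j).le hθκ
  have hterm₀ j l : 0 ≤ rK θ (c j) l ^ κ := Real.rpow_nonneg (rK_pos (hc j) l).le κ
  apply Set.finite_and_ncard_le_of_forall_finset_card_le
  intro T hT
  calc (T.card : ℝ) = ∑ _l ∈ T, (1 : ℝ) := by simp
    _ ≤ ∑ l ∈ T, M ^ κ * ∏ j, rK θ (c j) (l j) ^ κ := by
        refine Finset.sum_le_sum fun l hl => ?_
        have hprod : 0 < ∏ j, rK θ (c j) (l j) :=
          Finset.prod_pos fun j _ => rK_pos (hc j) (l j)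
        rw [Real.finsetProd_rpow _ _ fun j _ => (rK_pos (hc j) (l j)).le]
        refine one_le_rpow_mul_rpow_of_inv_le hprod ?_ hκ₀
        exact (Finset.prod_inv_distrib _).symm.trans_le (hT hl)
    _ ≤ M ^ κ * ∏ j, (1 + 2 * zetaR (θ * κ) * c j ^ κ) := by
        rw [← Finset.mul_sum]
        refine mul_le_mul_of_nonneg_left ?_ (Real.rpow_nonneg (by linarith) κ)
        simpa only [fun j => (hsum j).tsum_eq] using
          Finset.sum_prod_le_prod_tsum (fun j => (hsum j).summable) hterm₀ T
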